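/- arXiv:1001.4504 — 3 statements merged into one kernel-verified Lean document; each statement's English description precedes it below -/
import Mathlib

section
/- Let l ≥ 2 and let L_1, …, L_l be linear forms in ℂ[x,y,z] such that any three of them are linearly independent over ℂ. Set \hat L_i = ∏_{j ≠ i} L_j for i = 1, …, l. Then the intersection of ideals ⋂_{1 ≤ i < j ≤ l} (L_i, L_j) in ℂ[x,y,z] equals the ideal (\hat L_1, …, \hat L_l) generated by the products \hat L_i. -/
/-!
Two facts about linear forms in `K[x, y, z]` turn this into a statement about commutative rings.
If `L, M` are independent linear forms, `(L, M)` is prime: with `c = L × M` (cross product of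
coefficient vectors), every variable is congruent modulo `(L, M)` to a multiple of one variable,
so `(L, M)` is the kernel of `f ↦ f(t • c)` into `K[t]`. If `L₁, L₂, L₃` are independent,
`L₃ ∉ (L₁, L₂)`, by comparing degree-one parts.

Given these, induct on the set of forms. If `F` lies in every `(L_i, L_j)` for `i, j ∈ t ∪ {a}`,
primality of the `(L_i, L_a)` gives `F = G * ∏_{i ∈ t} L_i + H * L_a`. Then for `i, j ∈ t`,
`H * L_a ∈ (L_i, L_j)` and `L_a ∉ (L_i, L_j)` give `H ∈ (L_i, L_j)`, so by induction `H` lies in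
the ideal generated by the `L̂_i` of `t`, whose products with `L_a` are the `L̂_i` of `t ∪ {a}`.
-/

open MvPolynomial Finset Matrix

theorem cross_smul_mem_span_pair {R : Type*} [CommRing R] {a b x : Fin 3 → R}
    (hx : x ⬝ᵥ a ⨯₃ b = 0) (k : Fin 3) : (a ⨯₃ b) k • x ∈ Submodule.span R {a, b} := by
  have h := cross_cross_eq_smul_sub_smul' (a ⨯₃ b) (Pi.single k 1) x
  rw [cross_cross_eq_smul_sub_smul, dotProduct_comm (a ⨯₃ b), hx, zero_smul, zero_sub,
    single_dotProduct, one_mul] at h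
  rw [show (a ⨯₃ b) k • x = (b ⬝ᵥ Pi.single k 1 ⨯₃ x) • a - (a ⬝ᵥ Pi.single k 1 ⨯₃ x) • b by
    rw [← neg_sub, h, neg_neg]]
  exact sub_mem (Submodule.smul_mem _ _ (Submodule.subset_span (by simp)))
    (Submodule.smul_mem _ _ (Submodule.subset_span (by simp)))

namespace MvPolynomial

variable {R σ : Type*}

theorem homogeneousComponent_one_mul [CommSemiring R] {L : MvPolynomial σ R}
    (hL : L.IsHomogeneous 1) (A : MvPolynomial σ R) :
    homogeneousComponent 1 (A * L) = C (coeff 0 A) * L := by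
  conv_lhs => rw [← sum_homogeneousComponent A, sum_mul, map_sum]
  rw [sum_eq_single 0]
  · rw [homogeneousComponent_of_mem ((homogeneousComponent_isHomogeneous 0 A).mul hL),
      if_pos rfl, homogeneousComponent_zero]
  · intro d _ hd
    rw [homogeneousComponent_of_mem ((homogeneousComponent_isHomogeneous d A).mul hL),
      if_neg (by omega)]
  · simp

theorem IsHomogeneous.eq_sum_coeff_single_smul_X [CommSemiring R] [Fintype σ]
    {f : MvPolynomial σ R} (hf : f.IsHomogeneous 1) :
    f = ∑ i, coeff (Finsupp.single i 1) f • X i := by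
  have hsum : (∑ i, coeff (Finsupp.single i 1) f • X i : MvPolynomial σ R).IsHomogeneous 1 :=
    IsHomogeneous.sum _ _ _ fun i _ ↦ by
      simpa only [smul_eq_C_mul] using isHomogeneous_C_mul_X _ i
  ext m
  by_cases hm : m.degree = 1
  · obtain ⟨i, rfl⟩ := (Finsupp.sum_eq_one_iff m).1 hm
    classical
    simp [coeff_sum, coeff_X, Finsupp.single_left_inj]
  · rw [hf.coeff_eq_zero hm, hsum.coeff_eq_zero hm]

theorem notMem_span_pair_of_linearIndependent {K : Type*} [Field K]
    {L₁ L₂ L₃ : MvPolynomial σ K} (h₁ : L₁.IsHomogeneous 1) (h₂ : L₂.IsHomogeneous 1)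
    (h₃ : L₃.IsHomogeneous 1) (hind : LinearIndependent K ![L₁, L₂, L₃]) :
    L₃ ∉ Ideal.span {L₁, L₂} := by
  intro h
  obtain ⟨A, B, hAB⟩ := Ideal.mem_span_pair.1 h
  have hK : L₃ ∈ Submodule.span K {L₁, L₂} := by
    refine Submodule.mem_span_pair.2 ⟨coeff 0 A, coeff 0 B, ?_⟩
    have := congrArg (homogeneousComponent 1) hAB
    rwa [map_add, homogeneousComponent_one_mul h₁, homogeneousComponent_one_mul h₂,
      homogeneousComponent_eq_self h₃, ← smul_eq_C_mul, ← smul_eq_C_mul] at this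
  exact hind.notMem_span_image (s := {0, 1}) (x := 2) (by decide)
    (by simpa [Set.image_insert_eq] using hK)

/-- Restriction of a polynomial to the line `t ↦ t • c`. -/
noncomputable def aevalLine [CommSemiring R] (c : σ → R) : MvPolynomial σ R →ₐ[R] Polynomial R :=
  aeval fun i ↦ c i • Polynomial.X

theorem aevalLine_sum_smul_X [CommSemiring R] [Fintype σ] (c v : σ → R) :
    aevalLine c (∑ i, v i • X i) = (v ⬝ᵥ c) • Polynomial.X := by
  simp [aevalLine, dotProduct, sum_smul, smul_smul]

theorem ker_aevalLine_eq [CommRing R] {I : Ideal (MvPolynomial σ R)} (c : σ → R) (k : σ)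
    (hX : ∀ i, X i - C (c i) * X k ∈ I) (hI : I ≤ RingHom.ker (aevalLine c)) :
    RingHom.ker (aevalLine c) = I := by
  set χ : Polynomial R →ₐ[R] MvPolynomial σ R := Polynomial.aeval (X k)
  have hsection : (Ideal.Quotient.mkₐ R I).comp (χ.comp (aevalLine c)) = Ideal.Quotient.mkₐ R I := by
    refine algHom_ext fun i ↦ ?_
    simp only [AlgHom.comp_apply, aevalLine, χ, aeval_X, Ideal.Quotient.mkₐ_eq_mk]
    rw [Ideal.Quotient.eq, map_smul, Polynomial.aeval_X, smul_eq_C_mul, ← neg_mem_iff, neg_sub]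
    exact hX i
  refine le_antisymm (fun f hf ↦ ?_) hI
  have := congrArg (· f) hsection
  simp only [AlgHom.comp_apply, RingHom.mem_ker.1 hf, map_zero, Ideal.Quotient.mkₐ_eq_mk] at this
  exact Ideal.Quotient.eq_zero_iff_mem.1 this.symm

theorem isPrime_span_pair_of_linearIndependent {K : Type*} [Field K] {L M : MvPolynomial (Fin 3) K}
    (hL : L.IsHomogeneous 1) (hM : M.IsHomogeneous 1)
    (hLM : LinearIndependent K ![L, M]) : (Ideal.span {L, M}).IsPrime := by
  set lin := Fintype.linearCombination K (X : Fin 3 → MvPolynomial (Fin 3) K)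
  set a : Fin 3 → K := fun i ↦ coeff (Finsupp.single i 1) L
  set b : Fin 3 → K := fun i ↦ coeff (Finsupp.single i 1) M
  have hLa : lin a = L := hL.eq_sum_coeff_single_smul_X.symm
  have hMb : lin b = M := hM.eq_sum_coeff_single_smul_X.symm
  have hab : LinearIndependent K ![a, b] := LinearIndependent.of_comp lin <| by
    convert hLM using 1
    ext i; fin_cases i <;> simp [hLa, hMb]
  obtain ⟨k, hk⟩ : ∃ k, (a ⨯₃ b) k ≠ 0 :=
    Function.ne_iff.1 (crossProduct_ne_zero_iff_linearIndependent.2 hab)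
  -- `a ⨯₃ b` spans the common zeros of `L` and `M`; rescale it so that `c k = 1`.
  set c := ((a ⨯₃ b) k)⁻¹ • a ⨯₃ b
  have hlin (i : Fin 3) : lin (Pi.single i 1) = X i := by simp [lin]
  have haeval (v : Fin 3 → K) : aevalLine c (lin v) = (v ⬝ᵥ c) • Polynomial.X :=
    aevalLine_sum_smul_X c v
  rw [← ker_aevalLine_eq (I := Ideal.span {L, M}) c k ?_ ?_]
  · exact RingHom.ker_isPrime _
  · intro i
    have hx : (Pi.single i 1 - c i • Pi.single k 1) ⬝ᵥ a ⨯₃ b = 0 := by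
      simp only [c, sub_dotProduct, smul_dotProduct, single_dotProduct, Pi.smul_apply,
        smul_eq_mul, one_mul]
      field_simp
      ring
    obtain ⟨α, β, h⟩ := Submodule.mem_span_pair.1 <|
      (Submodule.smul_mem_iff _ hk).1 (cross_smul_mem_span_pair hx k)
    refine Ideal.mem_span_pair.2 ⟨C α, C β, ?_⟩
    simpa [← hLa, ← hMb, hlin, smul_eq_C_mul] using congrArg lin h
  · rw [Ideal.span_le, Set.pair_subset_iff, SetLike.mem_coe, SetLike.mem_coe, RingHom.mem_ker,
      RingHom.mem_ker, ← hLa, ← hMb, haeval, haeval]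
    simp [c, dot_self_cross, dot_cross_self]

end MvPolynomial

namespace Ideal

variable {R ι : Type*} [CommRing R] [DecidableEq ι] (L : ι → R)

theorem mem_span_prod_pair_of_forall_mem {Q F : R} {s : Finset ι}
    (hprime : ∀ i ∈ s, (Ideal.span {L i, Q}).IsPrime)
    (hnotMem : ∀ i ∈ s, ∀ j ∈ s, i ≠ j → L j ∉ Ideal.span {L i, Q})
    (hF : ∀ i ∈ s, F ∈ Ideal.span {L i, Q}) :
    F ∈ Ideal.span {∏ i ∈ s, L i, Q} := by
  induction s using Finset.induction_on with
  | empty => exact Ideal.mem_span_pair.2 ⟨F, 0, by simp⟩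
  | @insert a t ha IH =>
    obtain ⟨u, v, huv⟩ := Ideal.mem_span_pair.1 <|
      IH (fun i hi ↦ hprime i (mem_insert_of_mem hi))
        (fun i hi j hj ↦ hnotMem i (mem_insert_of_mem hi) j (mem_insert_of_mem hj))
        (fun i hi ↦ hF i (mem_insert_of_mem hi))
    have hP := hprime a (mem_insert_self a t)
    have hprod : ∏ i ∈ t, L i ∉ Ideal.span {L a, Q} := fun h ↦ by
      obtain ⟨j, hj, hjP⟩ := hP.prod_mem_iff.1 h
      exact hnotMem a (mem_insert_self a t) j (mem_insert_of_mem hj) (by rintro rfl; exact ha hj)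
        hjP
    have hu : u * ∏ i ∈ t, L i ∈ Ideal.span {L a, Q} := by
      rw [show u * ∏ i ∈ t, L i = F - v * Q by rw [← huv]; ring]
      exact sub_mem (hF a (mem_insert_self a t))
        (Ideal.mul_mem_left _ v (Ideal.subset_span (by simp)))
    obtain ⟨w, z, rfl⟩ := Ideal.mem_span_pair.1 ((hP.mem_or_mem hu).resolve_right hprod)
    exact Ideal.mem_span_pair.2 ⟨w, z * ∏ i ∈ t, L i + v, by rw [prod_insert ha, ← huv]; ring⟩

theorem span_prod_erase_le_iInf_span_pair (s : Finset ι) :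
    Ideal.span ((fun i ↦ ∏ j ∈ s.erase i, L j) '' s)
      ≤ ⨅ i ∈ s, ⨅ j ∈ s, ⨅ (_ : i ≠ j), Ideal.span {L i, L j} := by
  rw [Ideal.span_le]
  rintro _ ⟨i, -, rfl⟩
  simp only [SetLike.mem_coe, Submodule.mem_iInf]
  intro j hj k hk hjk
  rcases eq_or_ne j i with rfl | hji
  · exact Ideal.mem_of_dvd _ (dvd_prod_of_mem L (mem_erase.2 ⟨hjk.symm, hk⟩))
      (Ideal.subset_span (by simp))
  · exact Ideal.mem_of_dvd _ (dvd_prod_of_mem L (mem_erase.2 ⟨hji, hj⟩))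
      (Ideal.subset_span (by simp))

theorem mul_mem_span_prod_erase_cons {a : ι} {t : Finset ι} (ha : a ∉ t) {H : R}
    (hH : H ∈ Ideal.span ((fun i ↦ ∏ j ∈ t.erase i, L j) '' t)) :
    H * L a ∈ Ideal.span ((fun i ↦ ∏ j ∈ (t.cons a ha).erase i, L j) '' (t.cons a ha)) := by
  have := Ideal.mul_mem_mul hH (Ideal.mem_span_singleton_self (L a))
  rw [Ideal.span_mul_span', Set.mul_singleton] at this
  refine Ideal.span_mono ?_ this
  rintro _ ⟨_, ⟨i, hi, rfl⟩, rfl⟩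
  refine ⟨i, mem_cons_of_mem hi, ?_⟩
  simp only [erase_cons_of_ne _ (ne_of_mem_of_not_mem hi ha).symm, prod_cons, mul_comm]

theorem iInf_span_pair_eq_span_prod_erase
    (hprime : ∀ i j, i ≠ j → (Ideal.span {L i, L j}).IsPrime)
    (hnotMem : ∀ i j k, i ≠ j → i ≠ k → j ≠ k → L k ∉ Ideal.span {L i, L j})
    {s : Finset ι} (hs : s.Nonempty) :
    ⨅ i ∈ s, ⨅ j ∈ s, ⨅ (_ : i ≠ j), Ideal.span {L i, L j}
      = Ideal.span ((fun i ↦ ∏ j ∈ s.erase i, L j) '' s) := by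
  refine le_antisymm ?_ (span_prod_erase_le_iInf_span_pair L s)
  induction hs using Finset.Nonempty.cons_induction with
  | singleton a => simp
  | cons a t ha ht IH =>
    intro F hF
    simp only [Submodule.mem_iInf] at hF
    have hta : ∀ i ∈ t, i ≠ a := fun i hi ↦ ne_of_mem_of_not_mem hi ha
    obtain ⟨G, H, rfl⟩ := Ideal.mem_span_pair.1 <| mem_span_prod_pair_of_forall_mem L
      (fun i hi ↦ hprime i a (hta i hi))
      (fun i hi j hj hij ↦ hnotMem i a j (hta i hi) hij (hta j hj).symm)
      (fun i hi ↦ hF i (mem_cons_of_mem hi) a (mem_cons_self a t) (hta i hi))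
    have hH : H ∈ ⨅ i ∈ t, ⨅ j ∈ t, ⨅ (_ : i ≠ j), Ideal.span {L i, L j} := by
      simp only [Submodule.mem_iInf]
      intro i hi j hj hij
      have hGt : G * ∏ m ∈ t, L m ∈ Ideal.span {L i, L j} := Ideal.mul_mem_left _ G <|
        Ideal.mem_of_dvd _ (dvd_prod_of_mem L hi) (Ideal.subset_span (by simp))
      have hHa : H * L a ∈ Ideal.span {L i, L j} := by
        simpa using sub_mem (hF i (mem_cons_of_mem hi) j (mem_cons_of_mem hj) hij) hGt
      exact ((hprime i j hij).mem_or_mem hHa).resolve_right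
        (hnotMem i j a hij (hta i hi) (hta j hj))
    refine add_mem (Ideal.mul_mem_left _ G (Ideal.subset_span ⟨a, mem_cons_self a t, ?_⟩))
      (mul_mem_span_prod_erase_cons L ha (IH hH))
    simp only [erase_cons]

end Ideal

theorem iInf_lt_eq_iInf_ne {α κ : Type*} [CompleteLattice α] [LinearOrder κ] {f : κ → κ → α}
    (hf : ∀ i j, f i j = f j i) :
    ⨅ (i) (j) (_ : i < j), f i j = ⨅ (i) (j) (_ : i ≠ j), f i j := by
  refine le_antisymm (le_iInf₂ fun i j ↦ le_iInf fun hij ↦ ?_)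
    (iInf₂_mono fun i j ↦ iInf_mono' fun hij ↦ ⟨hij.ne, le_rfl⟩)
  rcases hij.lt_or_gt with h | h
  · exact iInf₂_le_of_le i j (iInf_le _ h)
  · exact hf i j ▸ iInf₂_le_of_le j i (iInf_le _ h)

/-- For a star configuration given by linear forms `L 0, …, L (l-1)`
(any two linearly independent, any three linearly independent), the intersection ideal
`⋂_{i<j} (L i, L j)` equals the ideal generated by the products `L̂ i = ∏_{j ≠ i} L j`. -/
theorem star_configuration_ideal_generators
    (l : ℕ) (hl : 2 ≤ l)
    (L : Fin l → MvPolynomial (Fin 3) ℂ)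
    (hhom : ∀ i, (L i).IsHomogeneous 1)
    (hpair : ∀ i j : Fin l, i ≠ j → LinearIndependent ℂ ![L i, L j])
    (htriple : ∀ i j k : Fin l, i ≠ j → i ≠ k → j ≠ k →
      LinearIndependent ℂ ![L i, L j, L k]) :
    (⨅ (i : Fin l) (j : Fin l) (_ : i < j),
        Ideal.span {L i, L j} : Ideal (MvPolynomial (Fin 3) ℂ))
      = Ideal.span (Set.range fun i : Fin l => ∏ j ∈ Finset.univ.erase i, L j) := by
  have hprime (i j : Fin l) (hij : i ≠ j) : (Ideal.span {L i, L j}).IsPrime :=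
    isPrime_span_pair_of_linearIndependent (hhom i) (hhom j) (hpair i j hij)
  have hnotMem (i j k : Fin l) (hij : i ≠ j) (hik : i ≠ k) (hjk : j ≠ k) :
      L k ∉ Ideal.span {L i, L j} :=
    notMem_span_pair_of_linearIndependent (hhom i) (hhom j) (hhom k) (htriple i j k hij hik hjk)
  rw [iInf_lt_eq_iInf_ne fun i j ↦ by rw [Set.pair_comm]]
  simpa using Ideal.iInf_span_pair_eq_span_prod_erase L hprime hnotMem (s := univ)
    ⟨⟨0, by omega⟩, mem_univ _⟩
end

section
/- Let l ≥ 2 and let L_1, …, L_l be linear forms in ℂ[x,y,z] such that any three of them are linearly independent over ℂ, with associated star configuration points p_{i,j} for 1 ≤ i < j ≤ l. If F ∈ ℂ[x,y,z] is a homogeneous polynomial of degree d with d < l − 1 that vanishes at every point p_{i,j}, then F = 0. In particular, no plane curve of degree d < l − 1 contains a star configuration X(l). -/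
/-!
Induction on `d`. The points `p₀ⱼ` (`j ≠ 0`) are `l - 1 > d` pairwise distinct points of the
line `L₀ = 0`; a binary form of degree `d` with more than `d` zeros on `ℙ¹` vanishes, so `F`
vanishes on that line and `F = L₀ G` with `G` of degree `d - 1`. Since any three of the forms are
independent, `L₀` does not vanish at the points `pᵢⱼ` with `i, j ≠ 0`, so `G` contains the star
configuration of the remaining `l - 1` forms. The binary-form fact has the same shape: every
zero `y` splits off the linear factor `det (·, y)`.
-/

open MvPolynomial

namespace MvPolynomial

section CommSemiring

variable {σ R : Type*} [CommSemiring R]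

theorem IsHomogeneous.eval_smul {φ : MvPolynomial σ R} {n : ℕ} (hφ : φ.IsHomogeneous n)
    (c : R) (v : σ → R) : eval (c • v) φ = c ^ n * eval v φ := by
  rw [eval_eq, eval_eq, Finset.mul_sum]
  refine Finset.sum_congr rfl fun m hm => ?_
  have hdeg : ∑ i ∈ m.support, m i = n := by
    rw [← hφ (mem_support_iff.mp hm), Finsupp.weight_apply]
    simp [Finsupp.sum]
  simp only [Pi.smul_apply, smul_eq_mul, mul_pow, Finset.prod_mul_distrib,
    Finset.prod_pow_eq_pow_sum, hdeg]
  ring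

theorem IsHomogeneous.exists_linearMap_eval {L : MvPolynomial σ R} (hL : L.IsHomogeneous 1) :
    ∃ f : Module.Dual R (σ → R), ∀ v, eval v L = f v := by
  rw [← mem_homogeneousSubmodule, homogeneousSubmodule_one_eq_span_X] at hL
  induction hL using Submodule.span_induction with
  | mem p hp =>
    obtain ⟨s, rfl⟩ := hp
    exact ⟨LinearMap.proj s, fun v => eval_X ..⟩
  | zero => exact ⟨0, fun v => by simp⟩
  | add p q _ _ hp hq =>
    obtain ⟨f, hf⟩ := hp
    obtain ⟨g, hg⟩ := hq
    exact ⟨f + g, fun v => by simp [hf, hg]⟩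
  | smul a p _ hp =>
    obtain ⟨f, hf⟩ := hp
    exact ⟨a • f, fun v => by simp [hf]⟩

theorem eq_zero_of_isHomogeneous_zero_of_eval_eq_zero {F : MvPolynomial σ R}
    (hF : F.IsHomogeneous 0) {v : σ → R} (hv : eval v F = 0) : F = 0 := by
  have hC := totalDegree_eq_zero_iff_eq_C.mp ((totalDegree_zero_iff_isHomogeneous (p := F)).mpr hF)
  rw [hC, eval_C] at hv
  rw [hC, hv, C_0]

attribute [local instance] gradedAlgebra in
theorem IsHomogeneous.exists_eq_mul_of_dvd {L F : MvPolynomial σ R} {m n : ℕ}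
    (hL : L.IsHomogeneous m) (hF : F.IsHomogeneous (m + n)) (h : L ∣ F) :
    ∃ G : MvPolynomial σ R, G.IsHomogeneous n ∧ F = L * G := by
  obtain ⟨G, rfl⟩ := h
  refine ⟨homogeneousComponent n G, homogeneousComponent_isHomogeneous n G, ?_⟩
  rw [← homogeneousComponent_eq_self hF, ← decomposition.decompose'_apply,
    ← decomposition.decompose'_apply]
  exact DirectSum.coe_decompose_mul_add_of_left_mem (homogeneousSubmodule σ R) hL

theorem eval_aeval {τ : Type*} (v : τ → R) (g : σ → MvPolynomial τ R) (F : MvPolynomial σ R) :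
    eval v (aeval g F) = eval (fun s => eval v (g s)) F := by
  induction F using MvPolynomial.induction_on <;>
    simp only [map_add, map_mul, aeval_X, aeval_C, eval_X, eval_C, algebraMap_eq, *]

theorem IsHomogeneous.exists_eval_comp_linearMap {τ : Type*} [Fintype τ] [DecidableEq τ]
    {F : MvPolynomial σ R} {d : ℕ} (hF : F.IsHomogeneous d) (e : (τ → R) →ₗ[R] σ → R) :
    ∃ q : MvPolynomial τ R, q.IsHomogeneous d ∧ ∀ y, eval y q = eval (e y) F := by
  refine ⟨MvPolynomial.aeval (fun s => ∑ t, C (e (Pi.single t 1) s) * X t) F, ?_, fun y => ?_⟩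
  · simpa only [one_mul] using
      hF.aeval _ fun s => IsHomogeneous.sum _ _ _ fun t _ => isHomogeneous_C_mul_X _ t
  · have he : (fun s => eval y (∑ t, C (e (Pi.single t 1) s) * X t)) = e y := by
      ext s
      conv_rhs => rw [← (Pi.basisFun R τ).sum_repr y]
      simp [mul_comm]
    rw [eval_aeval, he]

end CommSemiring

section Field

variable {σ K : Type*} [Field K]

theorem exists_ne_zero_forall_eval_eq_zero [Fintype σ] {ι : Type*} [Fintype ι]
    (hcard : Fintype.card ι < Fintype.card σ) {L : ι → MvPolynomial σ K}
    (hL : ∀ i, (L i).IsHomogeneous 1) : ∃ v ≠ 0, ∀ i, eval v (L i) = 0 := by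
  choose f hf using fun i => (hL i).exists_linearMap_eval
  obtain ⟨v, hv, hv0⟩ := Submodule.exists_mem_ne_zero_of_ne_bot
    (LinearMap.ker_ne_bot_of_finrank_lt (f := LinearMap.pi f) (by simpa using hcard))
  exact ⟨v, hv0, fun i => by simpa [hf] using congrFun (LinearMap.mem_ker.mp hv) i⟩

noncomputable def lineForm (y : Fin 2 → K) : MvPolynomial (Fin 2) K := C (y 1) * X 0 - C (y 0) * X 1

@[simp]
theorem eval_lineForm (y v : Fin 2 → K) : eval v (lineForm y) = y 1 * v 0 - y 0 * v 1 := by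
  simp [lineForm]

theorem isHomogeneous_lineForm (y : Fin 2 → K) : (lineForm y).IsHomogeneous 1 :=
  (isHomogeneous_C_mul_X _ _).sub (isHomogeneous_C_mul_X _ _)

theorem lineForm_ne_zero {y : Fin 2 → K} (hy : y ≠ 0) : lineForm y ≠ 0 := by
  intro h
  have h₀ := congrArg (eval ![1, 0]) h
  have h₁ := congrArg (eval ![0, 1]) h
  simp only [eval_lineForm, map_zero] at h₀ h₁
  exact hy (by ext i; fin_cases i <;> simp_all)

theorem exists_eq_smul_of_eval_lineForm_eq_zero {y v : Fin 2 → K} (hy : y ≠ 0)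
    (hv : eval v (lineForm y) = 0) : ∃ c : K, v = c • y := by
  rw [eval_lineForm, sub_eq_zero] at hv
  by_cases h₀ : y 0 = 0
  · have h₁ : y 1 ≠ 0 := fun h₁ => hy (by ext i; fin_cases i <;> simp_all)
    refine ⟨v 1 / y 1, ?_⟩
    ext i
    fin_cases i
    · simp_all
    · simp [h₁]
  · refine ⟨v 0 / y 0, ?_⟩
    ext i
    fin_cases i
    · simp [h₀]
    · simp
      field_simp
      linear_combination -hv

variable [Infinite K]

theorem IsHomogeneous.exists_ne_zero_linearMap_eval {L : MvPolynomial σ K}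
    (hL : L.IsHomogeneous 1) (hL0 : L ≠ 0) :
    ∃ f : Module.Dual K (σ → K), f ≠ 0 ∧ ∀ v, eval v L = f v := by
  obtain ⟨f, hf⟩ := hL.exists_linearMap_eval
  exact ⟨f, fun h => hL0 (hL.eq_zero_of_forall_eval_eq_zero fun v => by simp [hf, h]), hf⟩

theorem IsHomogeneous.dvd_of_forall_eval_eq_zero {L F : MvPolynomial σ K}
    (hL : L.IsHomogeneous 1) (hL0 : L ≠ 0) (hF : ∀ v, eval v L = 0 → eval v F = 0) : L ∣ F := by
  obtain ⟨f, hf0, hf⟩ := hL.exists_ne_zero_linearMap_eval hL0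
  obtain ⟨w, hw⟩ := (Module.Dual.range_eq_top_of_ne_zero hf0).ge (Submodule.mem_top (x := 1))
  -- `τ` projects along `w` onto the plane `L = 0`, and is the identity modulo `L`
  let τ : MvPolynomial σ K →ₐ[K] MvPolynomial σ K := MvPolynomial.aeval fun s => X s - C (w s) * L
  have hτF : τ F = 0 := by
    refine MvPolynomial.funext fun v => ?_
    rw [eval_aeval, map_zero]
    have hproj : (fun s => eval v (X s - C (w s) * L)) = v - f v • w := by
      ext s
      simp [hf, mul_comm]
    rw [hproj]
    exact hF _ (by simp [hf, hw])
  have hτ : (Ideal.Quotient.mkₐ K (Ideal.span {L})).comp τ = Ideal.Quotient.mkₐ K _ := by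
    refine algHom_ext fun s => ?_
    simp only [AlgHom.comp_apply, τ, aeval_X, Ideal.Quotient.mkₐ_eq_mk, Ideal.Quotient.eq,
      Ideal.mem_span_singleton]
    exact ⟨-C (w s), by ring⟩
  rw [← Ideal.mem_span_singleton, ← Ideal.Quotient.eq_zero_iff_mem, ← Ideal.Quotient.mkₐ_eq_mk K,
    ← hτ, AlgHom.comp_apply, hτF, map_zero]

theorem eq_zero_of_linearIndependent_of_forall_eval_eq_zero [Fintype σ] {ι : Type*} [Fintype ι]
    (hcard : Fintype.card ι = Fintype.card σ) {L : ι → MvPolynomial σ K}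
    (hL : ∀ i, (L i).IsHomogeneous 1) (hind : LinearIndependent K L) {v : σ → K}
    (hv : ∀ i, eval v (L i) = 0) : v = 0 := by
  choose f hf using fun i => (hL i).exists_linearMap_eval
  have hfind : LinearIndependent K f := by
    rw [Fintype.linearIndependent_iff] at hind ⊢
    refine fun g hg => hind g (IsHomogeneous.eq_zero_of_forall_eval_eq_zero (n := 1) ?_ fun x => ?_)
    · exact (homogeneousSubmodule σ K 1).sum_mem fun i _ =>
        (homogeneousSubmodule σ K 1).smul_mem (g i) (hL i)
    · simpa [hf] using congrArg (· x) hg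
  have hspan := hfind.span_eq_top_of_card_eq_finrank' (by simp [hcard])
  have hker : Submodule.span K (Set.range f) ≤ LinearMap.ker (Module.Dual.eval K _ v) :=
    Submodule.span_le.mpr (by rintro _ ⟨i, rfl⟩; simp [← hf, hv])
  refine (Module.forall_dual_apply_eq_zero_iff K v).mp fun φ => ?_
  simpa using hker (hspan ▸ Submodule.mem_top : φ ∈ Submodule.span K (Set.range f))

theorem IsHomogeneous.eq_zero_of_degree_lt_card_of_eval_eq_zero {q : MvPolynomial (Fin 2) K}
    {d : ℕ} (hq : q.IsHomogeneous d) {ι : Type*} (T : Finset ι) (y : ι → Fin 2 → K)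
    (hT : d < T.card) (hy0 : ∀ j ∈ T, y j ≠ 0)
    (hy : (T : Set ι).Pairwise fun j k => ∀ c : K, y k ≠ c • y j)
    (hqy : ∀ j ∈ T, eval (y j) q = 0) : q = 0 := by
  classical
  induction d generalizing q T with
  | zero =>
    obtain ⟨j, hj⟩ := Finset.card_pos.mp hT
    exact eq_zero_of_isHomogeneous_zero_of_eval_eq_zero hq (hqy j hj)
  | succ d ih =>
    obtain ⟨j, hj⟩ := Finset.card_pos.mp (by omega : 0 < T.card)
    have hMq : lineForm (y j) ∣ q := by
      refine (isHomogeneous_lineForm _).dvd_of_forall_eval_eq_zero (lineForm_ne_zero (hy0 j hj))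
        fun v hv => ?_
      obtain ⟨c, rfl⟩ := exists_eq_smul_of_eval_lineForm_eq_zero (hy0 j hj) hv
      rw [hq.eval_smul, hqy j hj, mul_zero]
    obtain ⟨g, hg, rfl⟩ :=
      (isHomogeneous_lineForm _).exists_eq_mul_of_dvd (add_comm d 1 ▸ hq) hMq
    suffices g = 0 by rw [this, mul_zero]
    refine ih hg (T.erase j) (by rw [Finset.card_erase_of_mem hj]; omega)
      (fun k hk => hy0 k (Finset.mem_of_mem_erase hk))
      (hy.mono (by simp)) fun k hk => ?_
    have hMk : eval (y k) (lineForm (y j)) ≠ 0 := fun h => by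
      obtain ⟨c, hc⟩ := exists_eq_smul_of_eval_lineForm_eq_zero (hy0 j hj) h
      exact hy hj (Finset.mem_of_mem_erase hk) (Finset.ne_of_mem_erase hk).symm c hc
    simpa only [map_mul, mul_eq_zero, hMk, false_or] using hqy k (Finset.mem_of_mem_erase hk)

theorem IsHomogeneous.eval_eq_zero_of_mem_of_degree_lt_card {F : MvPolynomial σ K} {d : ℕ}
    (hF : F.IsHomogeneous d) {W : Submodule K (σ → K)} (hW : Module.finrank K W = 2)
    {ι : Type*} [Fintype ι] (p : ι → σ → K) (hd : d < Fintype.card ι) (hpW : ∀ j, p j ∈ W)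
    (hp0 : ∀ j, p j ≠ 0) (hp : Pairwise fun j k => ∀ c : K, p k ≠ c • p j)
    (hpF : ∀ j, eval (p j) F = 0) {v : σ → K} (hv : v ∈ W) : eval v F = 0 := by
  have : Module.Finite K W := Module.finite_of_finrank_eq_succ hW
  let E : (Fin 2 → K) ≃ₗ[K] W := LinearEquiv.ofFinrankEq _ _ (by simp [hW])
  obtain ⟨q, hq, hqF⟩ := hF.exists_eval_comp_linearMap (W.subtype ∘ₗ E.toLinearMap)
  have hEp : ∀ w : W, (W.subtype ∘ₗ E.toLinearMap) (E.symm w) = w := by simp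
  have hq0 : q = 0 := by
    refine hq.eq_zero_of_degree_lt_card_of_eval_eq_zero Finset.univ (fun j => E.symm ⟨p j, hpW j⟩)
      (by simpa using hd) (fun j _ h => hp0 j ?_) (fun j _ k _ hjk c h => hp hjk c ?_)
      fun j _ => by rw [hqF, hEp, hpF]
    · simpa using congrArg (fun x => (E x : σ → K)) h
    · simpa using congrArg (fun x => (E x : σ → K)) h
  simpa [hEp, hq0] using (hqF (E.symm ⟨v, hv⟩)).symm

theorem IsHomogeneous.dvd_of_degree_lt_card_of_eval_eq_zero {L F : MvPolynomial (Fin 3) K}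
    {d : ℕ} (hL : L.IsHomogeneous 1) (hL0 : L ≠ 0) (hF : F.IsHomogeneous d) {ι : Type*}
    [Fintype ι] (p : ι → Fin 3 → K) (hd : d < Fintype.card ι) (hpL : ∀ j, eval (p j) L = 0)
    (hp0 : ∀ j, p j ≠ 0) (hp : Pairwise fun j k => ∀ c : K, p k ≠ c • p j)
    (hpF : ∀ j, eval (p j) F = 0) : L ∣ F := by
  obtain ⟨f, hf0, hf⟩ := hL.exists_ne_zero_linearMap_eval hL0
  have hW : Module.finrank K (LinearMap.ker f) = 2 := by
    have := f.finrank_ker_add_one_of_ne_zero hf0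
    simp only [Module.finrank_fin_fun] at this
    omega
  refine hL.dvd_of_forall_eval_eq_zero hL0 fun v hv =>
    hF.eval_eq_zero_of_mem_of_degree_lt_card hW p hd (fun j => ?_) hp0 hp hpF ?_
  · simpa [hf] using hpL j
  · simpa [hf] using hv

theorem eval_ne_zero_of_linearIndependent {L₁ L₂ L₃ : MvPolynomial (Fin 3) K}
    (h₁ : L₁.IsHomogeneous 1) (h₂ : L₂.IsHomogeneous 1) (h₃ : L₃.IsHomogeneous 1)
    (hind : LinearIndependent K ![L₁, L₂, L₃]) {v : Fin 3 → K} (hv : v ≠ 0)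
    (hv₁ : eval v L₁ = 0) (hv₂ : eval v L₂ = 0) : eval v L₃ ≠ 0 := fun hv₃ =>
  hv (eq_zero_of_linearIndependent_of_forall_eval_eq_zero rfl
    (by simp [Fin.forall_fin_succ, h₁, h₂, h₃]) hind (by simp [Fin.forall_fin_succ, hv₁, hv₂, hv₃]))

end Field

end MvPolynomial

theorem dvd_of_vanishes_on_star {K : Type*} [Field K] [Infinite K] {m d : ℕ}
    {L : Fin (m + 1) → MvPolynomial (Fin 3) K} (hhom : ∀ i, (L i).IsHomogeneous 1)
    (htriple : ∀ i j k : Fin (m + 1), i ≠ j → i ≠ k → j ≠ k →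
      LinearIndependent K ![L i, L j, L k])
    (hd : d + 1 < m) {F : MvPolynomial (Fin 3) K} (hF : F.IsHomogeneous (d + 1))
    (hvan : ∀ i j : Fin (m + 1), i ≠ j → ∀ v : Fin 3 → K, v ≠ 0 →
      eval v (L i) = 0 → eval v (L j) = 0 → eval v F = 0) :
    L 0 ∣ F := by
  have hL0 : L 0 ≠ 0 := by
    simpa using (htriple 0 (Fin.succ ⟨0, by omega⟩) (Fin.succ ⟨1, by omega⟩)
      (Fin.succ_ne_zero _).symm (Fin.succ_ne_zero _).symm (by simp)).ne_zero 0
  choose p hp0 hp using fun j : Fin m =>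
    exists_ne_zero_forall_eval_eq_zero (σ := Fin 3) (L := ![L 0, L j.succ]) (by simp)
      (by simp [Fin.forall_fin_two, hhom])
  refine (hhom 0).dvd_of_degree_lt_card_of_eval_eq_zero hL0 hF p (by simpa using hd)
    (fun j => hp j 0) hp0 (fun j k hjk c hc => ?_)
    fun j => hvan 0 j.succ (Fin.succ_ne_zero j).symm _ (hp0 j) (hp j 0) (hp j 1)
  refine eval_ne_zero_of_linearIndependent (hhom 0) (hhom k.succ) (hhom j.succ)
    (htriple 0 k.succ j.succ (Fin.succ_ne_zero k).symm (Fin.succ_ne_zero j).symm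
      ((Fin.succ_injective _).ne hjk.symm)) (hp0 k) (hp k 0) (hp k 1) ?_
  simpa [hc, (hhom _).eval_smul] using Or.inr (hp j 1)

theorem no_small_degree_curve_contains_star_general
    (l : ℕ)
    (L : Fin l → MvPolynomial (Fin 3) ℂ)
    (hhom : ∀ i, (L i).IsHomogeneous 1)
    (htriple : ∀ i j k : Fin l, i ≠ j → i ≠ k → j ≠ k →
      LinearIndependent ℂ ![L i, L j, L k])
    (d : ℕ) (hd : d < l - 1)
    (F : MvPolynomial (Fin 3) ℂ) (hF : F.IsHomogeneous d)
    (hvan : ∀ i j : Fin l, i ≠ j → ∀ v : Fin 3 → ℂ, v ≠ 0 →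
      eval v (L i) = 0 → eval v (L j) = 0 → eval v F = 0) :
    F = 0 := by
  induction d generalizing l F with
  | zero =>
    obtain ⟨v, hv0, hv⟩ := exists_ne_zero_forall_eval_eq_zero (σ := Fin 3)
      (L := ![L ⟨0, by omega⟩, L ⟨1, by omega⟩]) (by simp) (by simp [Fin.forall_fin_two, hhom])
    exact eq_zero_of_isHomogeneous_zero_of_eval_eq_zero hF
      (hvan _ _ (by simp [Fin.ext_iff]) v hv0 (hv 0) (hv 1))
  | succ d ih =>
    obtain ⟨m, rfl⟩ : ∃ m, l = m + 1 := ⟨l - 1, by omega⟩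
    obtain ⟨G, hG, rfl⟩ := (hhom 0).exists_eq_mul_of_dvd (add_comm d 1 ▸ hF)
      (dvd_of_vanishes_on_star hhom htriple (by omega) hF hvan)
    have hsucc : ∀ {i j : Fin m}, i ≠ j → i.succ ≠ j.succ := (Fin.succ_injective m).ne
    suffices G = 0 by rw [this, mul_zero]
    refine ih m (fun j => L j.succ) (fun j => hhom _)
      (fun i j k hij hik hjk => htriple _ _ _ (hsucc hij) (hsucc hik) (hsucc hjk)) (by omega) G hG
      fun i j hij v hv hi hj => ?_
    have h0 : eval v (L 0) ≠ 0 := eval_ne_zero_of_linearIndependent (hhom _) (hhom _) (hhom 0)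
      (htriple _ _ _ (hsucc hij) (Fin.succ_ne_zero i) (Fin.succ_ne_zero j)) hv hi hj
    simpa [h0] using hvan _ _ (hsucc hij) v hv hi hj

/-- Let `l ≥ 2` and let `L 0, …, L (l-1)` be linear forms in `ℂ[x,y,z]`,
any two linearly independent and any three linearly independent over `ℂ`, with star
configuration points `p i j` (= the common projective zeros of `L i` and `L j`).
If `F` is homogeneous of degree `d < l - 1` and vanishes at every point `p i j`
(i.e. at every nonzero common zero of `L i` and `L j` for all `i ≠ j`), then `F = 0`. -/
theorem no_small_degree_curve_contains_star
    (l : ℕ) (hl : 2 ≤ l)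
    (L : Fin l → MvPolynomial (Fin 3) ℂ)
    (hhom : ∀ i, (L i).IsHomogeneous 1)
    (hpair : ∀ i j : Fin l, i ≠ j → LinearIndependent ℂ ![L i, L j])
    (htriple : ∀ i j k : Fin l, i ≠ j → i ≠ k → j ≠ k →
      LinearIndependent ℂ ![L i, L j, L k])
    (d : ℕ) (hd : d < l - 1)
    (F : MvPolynomial (Fin 3) ℂ) (hF : F.IsHomogeneous d)
    (hvan : ∀ i j : Fin l, i ≠ j → ∀ v : Fin 3 → ℂ, v ≠ 0 →
      eval v (L i) = 0 → eval v (L j) = 0 → eval v F = 0) :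
    F = 0 :=
  no_small_degree_curve_contains_star_general l L hhom htriple d hd F hF hvan
end

section
/- Let l ≥ 2 and let L_1, …, L_l be linear forms in ℂ[x,y,z] such that any three of them are linearly independent over ℂ, and let I_{X(l)} = ⋂_{1 ≤ i < j ≤ l} (L_i, L_j). Then for every integer d ≥ l − 1, the degree-d graded piece of I_{X(l)} has dimension dim_ℂ (I_{X(l)})_d = binom(d+2, 2) − binom(l, 2). -/
/-!
The points of `X(l)` are the `binom(l, 2)` points `p_{ij}` where `L_i = L_j = 0`; since any three
of the forms are independent, `p_{ij}` lies on no other `L_k`. For a form `F` of degree `d`,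
`F ∈ (L_i, L_j)` iff `F(p_{ij}) = 0`: modulo `(L_i, L_j)` every variable is a multiple of a single
linear form `M`, so `F ≡ F(p_{ij}) M^d`. Hence `(I_{X(l)})_d` is the kernel of evaluation
`S_d → ℂ^{binom(l, 2)}` at these points. For `d ≥ l - 2` this map is onto, because
`∏_{k ≠ i, j} L_k`, times a power of a variable not vanishing at `p_{ij}`, vanishes at every point
but `p_{ij}`; rank–nullity gives the formula.
-/

open MvPolynomial Finset

theorem LinearMap.surjective_of_pi_single_mem_range {R M ι : Type*} [Semiring R]
    [AddCommMonoid M] [Module R M] [Finite ι] [DecidableEq ι] (f : M →ₗ[R] ι → R)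
    (h : ∀ i, Pi.single i 1 ∈ LinearMap.range f) : Function.Surjective f := by
  rw [← LinearMap.range_eq_top, eq_top_iff, ← (Pi.basisFun R ι).span_eq, Submodule.span_le]
  rintro _ ⟨i, rfl⟩
  simpa using h i

theorem LinearMap.finrank_ker_inf_of_surjective_domRestrict {K M N : Type*} [Field K]
    [AddCommGroup M] [Module K M] [AddCommGroup N] [Module K N] (f : M →ₗ[K] N)
    (W : Submodule K M) [FiniteDimensional K W] (hf : Function.Surjective (f.domRestrict W)) :
    Module.finrank K ↥(LinearMap.ker f ⊓ W) = Module.finrank K W - Module.finrank K N := by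
  have hrank := (f.domRestrict W).finrank_range_add_finrank_ker
  rw [LinearMap.range_eq_top.mpr hf, finrank_top, LinearMap.ker_domRestrict] at hrank
  rw [inf_comm, ← Submodule.map_comap_subtype, Submodule.finrank_map_subtype_eq]
  omega

namespace MvPolynomial

variable {σ R K : Type*}

instance [Finite σ] [CommSemiring R] (n : ℕ) : Module.Finite R (homogeneousSubmodule σ R n) :=
  Module.Finite.iff_fg.mpr (homogeneousSubmodule_fg σ R n)

theorem finrank_homogeneousSubmodule [Fintype σ] [DecidableEq σ] [Field K] (n : ℕ) :
    Module.finrank K (homogeneousSubmodule σ K n) = (Fintype.card σ + n - 1).choose n := by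
  have hset : {d : σ →₀ ℕ | d.degree = n} = ((univ : Finset σ).finsuppAntidiag n : Set _) := by
    ext d
    simp [mem_finsuppAntidiag, Finsupp.degree_eq_sum]
  rw [homogeneousSubmodule_eq_finsupp_supported, hset,
    (AddMonoidAlgebra.supportedEquivFinsupp _).finrank_eq, Module.finrank_finsupp_self]
  simp [card_finsuppAntidiag_nat_eq_choose]

theorem IsHomogeneous.aeval_smul [CommSemiring R] {A : Type*} [CommSemiring A] [Algebra R A]
    {F : MvPolynomial σ R} {n : ℕ} (hF : F.IsHomogeneous n) (c : σ → R) (m : A) :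
    MvPolynomial.aeval (fun s => c s • m) F = eval c F • m ^ n := by
  conv_lhs => rw [F.as_sum]
  rw [eval_eq, map_sum, sum_smul]
  refine sum_congr rfl fun d hd => ?_
  rw [aeval_monomial, Finsupp.prod, hF.degree_eq_sum_deg_support hd, ← prod_pow_eq_pow_sum]
  simp only [Algebra.smul_def, mul_pow, map_mul, map_prod, map_pow, prod_mul_distrib]
  ring

theorem exists_isHomogeneous_eval_eq_one_of_eval_eq_zero [Field K] {ι : Type*} [Fintype ι]
    [DecidableEq ι] {L : ι → MvPolynomial σ K} (hL : ∀ k, (L k).IsHomogeneous 1) (T : Finset ι)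
    {p : σ → K} (hp : p ≠ 0) (hpL : ∀ k ∉ T, eval p (L k) ≠ 0) {d : ℕ} (hd : #Tᶜ ≤ d) :
    ∃ G : MvPolynomial σ K, G.IsHomogeneous d ∧ eval p G = 1 ∧
      ∀ x : σ → K, (∃ k ∉ T, eval x (L k) = 0) → eval x G = 0 := by
  obtain ⟨s₀, hs₀⟩ : ∃ s, p s ≠ 0 := Function.ne_iff.mp hp
  set G₀ := X s₀ ^ (d - #Tᶜ) * ∏ k ∈ Tᶜ, L k
  have hG₀ : G₀.IsHomogeneous d := by
    have := (isHomogeneous_X_pow s₀ (d - #Tᶜ)).mul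
      (IsHomogeneous.prod Tᶜ L (fun _ => 1) fun k _ => hL k)
    rwa [sum_const, smul_eq_mul, mul_one, Nat.sub_add_cancel hd] at this
  have hpG₀ : eval p G₀ ≠ 0 := by
    simp only [G₀, map_mul, map_pow, map_prod, eval_X]
    exact mul_ne_zero (pow_ne_zero _ hs₀) (prod_ne_zero_iff.mpr fun k hk => hpL k (mem_compl.mp hk))
  refine ⟨C (eval p G₀)⁻¹ * G₀, hG₀.C_mul _, by simp [hpG₀], ?_⟩
  rintro x ⟨k, hk, hxk⟩
  rw [map_mul, mul_eq_zero]
  right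
  simp only [G₀, map_mul, map_prod]
  rw [prod_eq_zero (mem_compl.mpr hk) hxk, mul_zero]

section LinearForms

variable [CommSemiring R]

noncomputable def linearCoeffs (F : MvPolynomial σ R) (s : σ) : R := coeff (Finsupp.single s 1) F

theorem linearCoeffs_sum_smul_X [Fintype σ] [DecidableEq σ] (c : σ → R) :
    linearCoeffs (∑ s, c s • X s : MvPolynomial σ R) = c := by
  funext t
  simp [linearCoeffs, coeff_sum, coeff_X, Finsupp.single_left_inj one_ne_zero]

theorem IsHomogeneous.sum_linearCoeffs_smul_X [Fintype σ] {F : MvPolynomial σ R}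
    (hF : F.IsHomogeneous 1) : ∑ s, F.linearCoeffs s • X s = F := by
  classical
  rw [← mem_homogeneousSubmodule, homogeneousSubmodule_one_eq_span_X,
    Submodule.mem_span_range_iff_exists_fun] at hF
  obtain ⟨c, rfl⟩ := hF
  rw [linearCoeffs_sum_smul_X]

theorem IsHomogeneous.eval_eq_dotProduct [Fintype σ] {F : MvPolynomial σ R}
    (hF : F.IsHomogeneous 1) (p : σ → R) : eval p F = F.linearCoeffs ⬝ᵥ p := by
  conv_lhs => rw [← hF.sum_linearCoeffs_smul_X]
  simp [dotProduct]

end LinearForms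

section ThreeVariables

section CommRing

variable [CommRing R] {F G : MvPolynomial (Fin 3) R}

noncomputable def commonZero (F G : MvPolynomial (Fin 3) R) : Fin 3 → R :=
  crossProduct F.linearCoeffs G.linearCoeffs

theorem eval_commonZero_left (hF : F.IsHomogeneous 1) : eval (commonZero F G) F = 0 := by
  rw [hF.eval_eq_dotProduct]
  exact dot_self_cross _ _

theorem eval_commonZero_right (hG : G.IsHomogeneous 1) : eval (commonZero F G) G = 0 := by
  rw [hG.eval_eq_dotProduct]
  exact dot_cross_self _ _

end CommRing

variable [Field K] {L₁ L₂ : MvPolynomial (Fin 3) K}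

theorem commonZero_ne_zero (h₁ : L₁.IsHomogeneous 1) (h₂ : L₂.IsHomogeneous 1)
    (hind : LinearIndependent K ![L₁, L₂]) : commonZero L₁ L₂ ≠ 0 := by
  rw [commonZero, crossProduct_ne_zero_iff_linearIndependent]
  apply LinearIndependent.of_comp (Fintype.linearCombination K (X : Fin 3 → MvPolynomial (Fin 3) K))
  convert hind using 1
  ext i : 1
  fin_cases i <;>
    simp [Fintype.linearCombination_apply, h₁.sum_linearCoeffs_smul_X, h₂.sum_linearCoeffs_smul_X]

theorem mem_span_of_eval_eq_zero {ℓ : MvPolynomial (Fin 3) K} (h₁ : L₁.IsHomogeneous 1)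
    (h₂ : L₂.IsHomogeneous 1) (hind : LinearIndependent K ![L₁, L₂]) {p : Fin 3 → K}
    (hp : p ≠ 0) (hp₁ : eval p L₁ = 0) (hp₂ : eval p L₂ = 0) (hℓ : ℓ.IsHomogeneous 1)
    (hpℓ : eval p ℓ = 0) : ℓ ∈ Submodule.span K (Set.range ![L₁, L₂]) := by
  set V := homogeneousSubmodule (Fin 3) K 1
  set N := V ⊓ LinearMap.ker (MvPolynomial.aeval p).toLinearMap
  have hWN : Submodule.span K (Set.range ![L₁, L₂]) ≤ N := by
    rw [Submodule.span_le]
    rintro _ ⟨i, rfl⟩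
    fin_cases i
    · exact ⟨h₁, by simpa using hp₁⟩
    · exact ⟨h₂, by simpa using hp₂⟩
  have hNV : N < V := by
    refine lt_of_le_of_ne inf_le_left fun hNV => ?_
    obtain ⟨s, hs⟩ : ∃ s, p s ≠ 0 := Function.ne_iff.mp hp
    have hX : X s ∈ N := hNV ▸ isHomogeneous_X K s
    exact hs (by simpa using hX.2)
  have hfinN : Module.finrank K N ≤ Module.finrank K (Submodule.span K (Set.range ![L₁, L₂])) := by
    have := Submodule.finrank_lt_finrank_of_lt hNV
    rw [finrank_homogeneousSubmodule, Fintype.card_fin, Nat.choose_one_right] at this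
    rw [finrank_span_eq_card hind, Fintype.card_fin]
    omega
  have : FiniteDimensional K N := Submodule.finiteDimensional_of_le hNV.le
  rw [Submodule.eq_of_le_of_finrank_le hWN hfinN]
  exact ⟨hℓ, by simpa using hpℓ⟩

theorem mem_span_pair_iff_eval_eq_zero {F : MvPolynomial (Fin 3) K}
    (h₁ : L₁.IsHomogeneous 1) (h₂ : L₂.IsHomogeneous 1) (hind : LinearIndependent K ![L₁, L₂])
    {p : Fin 3 → K} (hp : p ≠ 0) (hp₁ : eval p L₁ = 0) (hp₂ : eval p L₂ = 0) {d : ℕ}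
    (hF : F.IsHomogeneous d) : F ∈ Ideal.span {L₁, L₂} ↔ eval p F = 0 := by
  refine ⟨fun hmem => ?_, fun hpF => ?_⟩
  · have hker : Ideal.span {L₁, L₂} ≤ RingHom.ker (eval p) := by
      rw [Ideal.span_le]
      rintro _ (rfl | rfl) <;> simpa
    exact hker hmem
  obtain ⟨s₀, hs₀⟩ : ∃ s, p s ≠ 0 := Function.ne_iff.mp hp
  set M : MvPolynomial (Fin 3) K := C (p s₀)⁻¹ * X s₀
  have hX : ∀ s, Ideal.Quotient.mkₐ K (Ideal.span {L₁, L₂}) (X s) =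
      p s • Ideal.Quotient.mkₐ K (Ideal.span {L₁, L₂}) M := by
    intro s
    have hM : (p s • M).IsHomogeneous 1 :=
      (homogeneousSubmodule _ K 1).smul_mem (p s) (isHomogeneous_C_mul_X _ s₀)
    have hmem : X s - p s • M ∈ Ideal.span {L₁, L₂} := by
      apply Submodule.span_le_restrictScalars K
      rw [← Matrix.range_cons_cons_empty L₁ L₂ ![]]
      refine mem_span_of_eval_eq_zero h₁ h₂ hind hp hp₁ hp₂ ((isHomogeneous_X K s).sub hM) ?_
      simp [M, hs₀]
    rw [← map_smul, Ideal.Quotient.mkₐ_eq_mk, Ideal.Quotient.mk_eq_mk_iff_sub_mem]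
    exact hmem
  rw [← Ideal.Quotient.eq_zero_iff_mem, ← Ideal.Quotient.mkₐ_eq_mk K,
    aeval_unique (Ideal.Quotient.mkₐ K _), Function.comp_def, _root_.funext hX, hF.aeval_smul,
    hpF, zero_smul]

theorem eval_commonZero_ne_zero {L₃ : MvPolynomial (Fin 3) K} (h₁ : L₁.IsHomogeneous 1)
    (h₂ : L₂.IsHomogeneous 1) (h₃ : L₃.IsHomogeneous 1)
    (hind : LinearIndependent K ![L₃, L₁, L₂]) : eval (commonZero L₁ L₂) L₃ ≠ 0 := fun h₀ => by
  obtain ⟨h₁₂, hL₃⟩ := linearIndependent_finCons.mp hind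
  exact hL₃ (mem_span_of_eval_eq_zero h₁ h₂ h₁₂ (commonZero_ne_zero h₁ h₂ h₁₂)
    (eval_commonZero_left h₁) (eval_commonZero_right h₂) h₃ h₀)

end ThreeVariables

end MvPolynomial

section StarConfiguration

variable {K : Type*} [Field K] {l : ℕ}

noncomputable def starConfigurationIdeal (L : Fin l → MvPolynomial (Fin 3) K) :
    Ideal (MvPolynomial (Fin 3) K) :=
  ⨅ (i : Fin l) (j : Fin l) (_ : i < j), Ideal.span {L i, L j}

noncomputable def evalStarPoints (L : Fin l → MvPolynomial (Fin 3) K) :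
    MvPolynomial (Fin 3) K →ₗ[K] {q : Fin l × Fin l // q.1 < q.2} → K :=
  LinearMap.pi fun q => (aeval (commonZero (L q.1.1) (L q.1.2))).toLinearMap

theorem evalStarPoints_apply (L : Fin l → MvPolynomial (Fin 3) K) (F : MvPolynomial (Fin 3) K)
    (q : {q : Fin l × Fin l // q.1 < q.2}) :
    evalStarPoints L F q = eval (commonZero (L q.1.1) (L q.1.2)) F := by
  simp [evalStarPoints]

theorem exists_notMem_pair_of_ne {q q₀ : {q : Fin l × Fin l // q.1 < q.2}} (h : q ≠ q₀) :
    ∃ k ∉ ({q₀.1.1, q₀.1.2} : Finset (Fin l)), k = q.1.1 ∨ k = q.1.2 := by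
  obtain ⟨⟨a, b⟩, hab : a < b⟩ := q
  obtain ⟨⟨i, j⟩, hij : i < j⟩ := q₀
  simp only [mem_insert, mem_singleton, Ne, Subtype.mk.injEq, Prod.mk.injEq] at h ⊢
  rw [Fin.lt_def] at hab hij
  simp only [Fin.ext_iff] at h ⊢
  by_cases ha : a.val = i.val ∨ a.val = j.val
  · exact ⟨b, by omega, Or.inr rfl⟩
  · exact ⟨a, by omega, Or.inl rfl⟩

variable {L : Fin l → MvPolynomial (Fin 3) K}

theorem starConfigurationIdeal_inf_homogeneousSubmodule (hhom : ∀ i, (L i).IsHomogeneous 1)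
    (hpair : ∀ i j : Fin l, i ≠ j → LinearIndependent K ![L i, L j]) (d : ℕ) :
    (starConfigurationIdeal L).restrictScalars K ⊓ homogeneousSubmodule (Fin 3) K d =
      LinearMap.ker (evalStarPoints L) ⊓ homogeneousSubmodule (Fin 3) K d := by
  ext F
  simp only [Submodule.mem_inf, Submodule.restrictScalars_mem, starConfigurationIdeal,
    Submodule.mem_iInf, LinearMap.mem_ker, mem_homogeneousSubmodule]
  refine and_congr_left fun hF => ?_
  rw [_root_.funext_iff, Subtype.forall, Prod.forall]
  refine forall₂_congr fun i j => forall_congr' fun hij => ?_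
  rw [evalStarPoints_apply, Pi.zero_apply]
  exact mem_span_pair_iff_eval_eq_zero (hhom i) (hhom j) (hpair i j hij.ne)
    (commonZero_ne_zero (hhom i) (hhom j) (hpair i j hij.ne)) (eval_commonZero_left (hhom i))
    (eval_commonZero_right (hhom j)) hF

theorem surjective_evalStarPoints_domRestrict (hhom : ∀ i, (L i).IsHomogeneous 1)
    (hpair : ∀ i j : Fin l, i ≠ j → LinearIndependent K ![L i, L j])
    (htriple : ∀ i j k : Fin l, i ≠ j → i ≠ k → j ≠ k → LinearIndependent K ![L i, L j, L k])
    {d : ℕ} (hd : l - 2 ≤ d) :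
    Function.Surjective ((evalStarPoints L).domRestrict (homogeneousSubmodule (Fin 3) K d)) := by
  classical
  refine LinearMap.surjective_of_pi_single_mem_range _ fun q₀ => ?_
  obtain ⟨⟨i, j⟩, hij⟩ := q₀
  have hcard : #({i, j} : Finset (Fin l))ᶜ ≤ d := by
    rw [card_compl, card_pair hij.ne, Fintype.card_fin]
    exact hd
  obtain ⟨G, hG, hG₀, hGq⟩ := exists_isHomogeneous_eval_eq_one_of_eval_eq_zero hhom {i, j}
    (commonZero_ne_zero (hhom i) (hhom j) (hpair i j hij.ne))
    (fun k hk => by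
      simp only [mem_insert, mem_singleton, not_or] at hk
      exact eval_commonZero_ne_zero (hhom i) (hhom j) (hhom k) (htriple k i j hk.1 hk.2 hij.ne))
    hcard
  refine ⟨⟨G, hG⟩, _root_.funext fun q => ?_⟩
  rw [LinearMap.domRestrict_apply, evalStarPoints_apply]
  by_cases hq : q = ⟨(i, j), hij⟩
  · subst hq
    simpa using hG₀
  · rw [Pi.single_eq_of_ne hq]
    apply hGq
    obtain ⟨k, hk, rfl | rfl⟩ := exists_notMem_pair_of_ne hq
    exacts [⟨_, hk, eval_commonZero_left (hhom _)⟩, ⟨_, hk, eval_commonZero_right (hhom _)⟩]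

end StarConfiguration

theorem star_configuration_ideal_dimension_general
    (l : ℕ)
    (L : Fin l → MvPolynomial (Fin 3) ℂ)
    (hhom : ∀ i, (L i).IsHomogeneous 1)
    (hpair : ∀ i j : Fin l, i ≠ j → LinearIndependent ℂ ![L i, L j])
    (htriple : ∀ i j k : Fin l, i ≠ j → i ≠ k → j ≠ k →
      LinearIndependent ℂ ![L i, L j, L k])
    (d : ℕ) (hd : l - 1 ≤ d) :
    Module.finrank ℂ
      ↥(Submodule.restrictScalars ℂ
          (⨅ (i : Fin l) (j : Fin l) (_ : i < j),
            Ideal.span {L i, L j} : Ideal (MvPolynomial (Fin 3) ℂ))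
        ⊓ homogeneousSubmodule (Fin 3) ℂ d)
      = (d + 2).choose 2 - l.choose 2 := by
  change Module.finrank ℂ ↥((starConfigurationIdeal L).restrictScalars ℂ ⊓ _) = _
  rw [starConfigurationIdeal_inf_homogeneousSubmodule hhom hpair,
    LinearMap.finrank_ker_inf_of_surjective_domRestrict _ _
      (surjective_evalStarPoints_domRestrict hhom hpair htriple (by omega)),
    finrank_homogeneousSubmodule, Module.finrank_fintype_fun_eq_card, Fintype.card_subtype,
    Fintype.card_product_filter_lt, Fintype.card_fin, Fintype.card_fin,
    show 3 + d - 1 = d + 2 by omega, Nat.choose_symm_add]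

/-- For the defining ideal `I = ⋂_{i<j} (L i, L j)` of a star
configuration `X(l)` (linear forms `L 0, …, L (l-1)`, any two linearly independent,
any three linearly independent) and every `d ≥ l - 1`, the degree-`d` graded piece
`I_d = I ∩ S_d` has dimension `binom(d+2,2) - binom(l,2)`. -/
theorem star_configuration_ideal_dimension
    (l : ℕ) (hl : 2 ≤ l)
    (L : Fin l → MvPolynomial (Fin 3) ℂ)
    (hhom : ∀ i, (L i).IsHomogeneous 1)
    (hpair : ∀ i j : Fin l, i ≠ j → LinearIndependent ℂ ![L i, L j])
    (htriple : ∀ i j k : Fin l, i ≠ j → i ≠ k → j ≠ k →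
      LinearIndependent ℂ ![L i, L j, L k])
    (d : ℕ) (hd : l - 1 ≤ d) :
    Module.finrank ℂ
      ↥(Submodule.restrictScalars ℂ
          (⨅ (i : Fin l) (j : Fin l) (_ : i < j),
            Ideal.span {L i, L j} : Ideal (MvPolynomial (Fin 3) ℂ))
        ⊓ homogeneousSubmodule (Fin 3) ℂ d)
      = (d + 2).choose 2 - l.choose 2 :=
  star_configuration_ideal_dimension_general l L hhom hpair htriple d hd
end
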